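/- arXiv:math/0602415 — 7 statements merged into one kernel-verified Lean document; each statement's English description precedes it below -/
import Mathlib

section
/- Let φ(x) be a predicate on ℝ such that {x ∈ ℝ | φ(x)} is a finite union of points and intervals. If for all but finitely many natural numbers n (viewed as reals) φ(n) holds, then there exists r ∈ ℝ such that φ(x) holds for all real x > r. -/
/-- `X` is a finite union of points and intervals. -/
def IsFinUnionOfPointsAndIntervals (X : Set ℝ) : Prop :=
  ∃ (n : ℕ) (f : Fin n → Set ℝ),
    (∀ i, ((∃ a : ℝ, f i = {a}) ∨ (f i).OrdConnected)) ∧ X = ⋃ i, f i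

theorem cofinitely_many_nat_implies_ray (φ : ℝ → Prop)
    (hdef : IsFinUnionOfPointsAndIntervals {x : ℝ | φ x})
    (hfin : {n : ℕ | ¬ φ (n : ℝ)}.Finite) :
    ∃ r : ℝ, ∀ x : ℝ, r < x → φ x := by
  obtain ⟨k, f, hf, hX⟩ := hdef
  -- each piece is ord-connected
  have hoc : ∀ i, (f i).OrdConnected := by
    intro i
    rcases hf i with ⟨a, ha⟩ | h
    · rw [ha]; exact Set.ordConnected_singleton
    · exact h
  -- the set of good naturals is infinite
  have hinf : {n : ℕ | φ (n : ℝ)}.Infinite := by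
    have := hfin.infinite_compl
    simpa [Set.compl_setOf] using this
  -- good naturals are covered by the pieces
  have hsub : {n : ℕ | φ (n : ℝ)} ⊆ ⋃ i, {n : ℕ | (n : ℝ) ∈ f i} := by
    intro n hn
    have : (n : ℝ) ∈ ⋃ i, f i := by rw [← hX]; exact hn
    simpa using this
  -- pigeonhole: some piece contains infinitely many naturals
  have : ∃ i, {n : ℕ | (n : ℝ) ∈ f i}.Infinite := by
    by_contra h
    push_neg at h
    exact hinf (Set.Finite.subset (Set.finite_iUnion h) hsub)
  obtain ⟨i, hi⟩ := this
  obtain ⟨n₀, hn₀⟩ := hi.nonempty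
  refine ⟨(n₀ : ℝ), fun x hx => ?_⟩
  -- find a natural m in the piece with x ≤ m
  obtain ⟨m, hm, hxm⟩ : ∃ m, (m : ℝ) ∈ f i ∧ x ≤ (m : ℝ) := by
    obtain ⟨M, hM⟩ := exists_nat_ge x
    obtain ⟨m, hm, hMm⟩ := hi.exists_gt M
    exact ⟨m, hm, hM.trans (by exact_mod_cast hMm.le)⟩
  have hxmem : x ∈ f i := (hoc i).out hn₀ hm ⟨hx.le, hxm⟩
  have : x ∈ ⋃ j, f j := Set.mem_iUnion.mpr ⟨i, hxmem⟩
  rw [← hX] at this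
  exact this
end

section
/- Define the class F of formulas in the language {+, ·, <, 0, 1} as the smallest class containing quantifier-free formulas and closed under Boolean connectives and the quantifier Qx φ := ∃z ∀x > z, φ. Then for every F-formula φ(x₁,...,xₘ) and all natural numbers n₁,...,nₘ, ℕ ⊨ φ(n₁,...,nₘ) if and only if ℝ ⊨ φ(n₁,...,nₘ); i.e., ℕ is an F-elementary substructure of the ordered field ℝ. -/
/-- Terms of the language `{+, ·, 0, 1}` with variables indexed by `ℕ`. -/
inductive OTerm : Type
  | var : ℕ → OTerm
  | zero : OTerm
  | one : OTerm
  | add : OTerm → OTerm → OTerm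
  | mul : OTerm → OTerm → OTerm
  deriving DecidableEq

/-- Evaluation of a term in any structure for the language `{+, ·, 0, 1}`. -/
def OTerm.eval {α : Type*} [Add α] [Mul α] [Zero α] [One α]
    (v : ℕ → α) : OTerm → α
  | .var i => v i
  | .zero => 0
  | .one => 1
  | .add t s => t.eval v + s.eval v
  | .mul t s => t.eval v * s.eval v

/-- The class `F` of formulas: quantifier-free formulas of the language
`{+, ·, <, 0, 1}` closed under Boolean connectives and the quantifier `Q`
("for all sufficiently large"), which binds the variable of the given index. -/
inductive FFormula : Type
  | eq : OTerm → OTerm → FFormula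
  | lt : OTerm → OTerm → FFormula
  | not : FFormula → FFormula
  | and : FFormula → FFormula → FFormula
  | or : FFormula → FFormula → FFormula
  | Q : ℕ → FFormula → FFormula
  deriving DecidableEq

/-- Satisfaction: `Q i φ` holds iff there is `z` such that `φ` holds whenever
the variable `i` is assigned any value `x > z`. -/
def FFormula.Sat (α : Type*) [Add α] [Mul α] [Zero α] [One α] [LT α]
    (v : ℕ → α) : FFormula → Prop
  | .eq t s => t.eval v = s.eval v
  | .lt t s => t.eval v < s.eval v
  | .not φ => ¬ φ.Sat α v
  | .and φ ψ => φ.Sat α v ∧ ψ.Sat α v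
  | .or φ ψ => φ.Sat α v ∨ ψ.Sat α v
  | .Q i φ => ∃ z : α, ∀ x : α, z < x → φ.Sat α (Function.update v i x)

/-!
Over an ordered field in which polynomials eventually have the sign of their leading coefficient,
`Q x` in front of a quantifier-free formula can be eliminated. An atom compares two polynomials in
`x` whose coefficients are terms in the other variables, and `Q x` of it says that their difference
vanishes, resp. has positive leading coefficient: quantifier-free conditions on the coefficients.
A quantifier-free condition on `x` is eventually constant, so `Q x` also commutes with `¬` and `∨`.
Hence every `F`-formula is equivalent over `ℝ` to a quantifier-free one, and every set of reals it
defines with parameters is eventually constant. For such a set, containing all large reals is the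
same as containing all large naturals, which is the `Q`-step of the induction comparing `ℕ` with
`ℝ`; the other steps hold because `ℕ` is a substructure of `ℝ`.
-/

open Polynomial Filter Function

namespace Filter.EventuallyConst

variable {α β : Type*} {l : Filter α} {p q : α → Prop}

theorem eventually_not_iff [NeBot l] (hp : EventuallyConst p l) :
    (∀ᶠ x in l, ¬ p x) ↔ ¬ ∀ᶠ x in l, p x :=
  ⟨fun h h' => (h.and h').exists.elim fun _ hx => hx.1 hx.2,
    (eventuallyConst_pred.1 hp).resolve_left⟩

theorem eventually_or_iff [NeBot l] (hp : EventuallyConst p l) :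
    (∀ᶠ x in l, p x ∨ q x) ↔ (∀ᶠ x in l, p x) ∨ ∀ᶠ x in l, q x := by
  refine ⟨fun h => ?_, fun h => h.elim (·.mono fun _ => .inl) (·.mono fun _ => .inr)⟩
  refine (eventuallyConst_pred.1 hp).imp id fun hnp => ?_
  exact (h.and hnp).mono fun _ hx => hx.1.resolve_left hx.2

theorem eventually_comp_iff {lb : Filter β} [NeBot lb] {g : β → α} (hp : EventuallyConst p l)
    (hg : Tendsto g lb l) : (∀ᶠ n in lb, p (g n)) ↔ ∀ᶠ x in l, p x :=
  ⟨fun h => (eventuallyConst_pred.1 hp).resolve_right fun hnp =>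
    (h.and (hg.eventually hnp)).exists.elim fun _ hx => hx.2 hx.1, hg.eventually⟩

end Filter.EventuallyConst

namespace Polynomial

theorem C_add_X_mul_eq_zero {R : Type*} [Semiring R] {c : R} {p : R[X]} :
    C c + X * p = 0 ↔ c = 0 ∧ p = 0 := by
  refine ⟨fun h => ⟨?_, ext fun n => ?_⟩, fun h => by simp [h.1, h.2]⟩
  · simpa using congr_arg (coeff · 0) h
  · simpa using congr_arg (coeff · (n + 1)) h

theorem leadingCoeff_C_add_X_mul {R : Type*} [Semiring R] [Nontrivial R] (c : R) {p : R[X]}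
    (hp : p ≠ 0) : (C c + X * p).leadingCoeff = p.leadingCoeff := by
  rw [X_mul, leadingCoeff_add_of_degree_lt, leadingCoeff_mul_X]
  rw [degree_mul_X, degree_eq_natDegree hp]
  exact degree_C_le.trans_lt (by exact_mod_cast p.natDegree.succ_pos)

variable {𝕜 : Type*} [NormedField 𝕜] [LinearOrder 𝕜] [IsStrictOrderedRing 𝕜] {P : 𝕜[X]}

theorem eventually_eval_eq_zero_iff : (∀ᶠ x in atTop, P.eval x = 0) ↔ P = 0 :=
  ⟨fun h => by_contra fun hP => (h.and (eventually_atTop_not_isRoot P hP)).exists.elim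
    fun _ hx => hx.2 hx.1, fun h => by simp [h]⟩

theorem eventuallyConst_eval_eq_zero (P : 𝕜[X]) :
    EventuallyConst (fun x => P.eval x = 0) atTop := by
  by_cases hP : P = 0
  · simp [hP]
  · exact eventuallyConst_pred.2 (.inr (eventually_atTop_not_isRoot P hP))

variable [OrderTopology 𝕜]

theorem eventually_eval_pos_of_leadingCoeff_pos (h : 0 < P.leadingCoeff) :
    ∀ᶠ x in atTop, 0 < P.eval x := by
  by_cases hdeg : 0 < P.degree
  · exact (P.tendsto_atTop_of_leadingCoeff_nonneg hdeg h.le).eventually_gt_atTop 0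
  · have hP := eq_C_of_degree_le_zero (not_lt.mp hdeg)
    rw [hP, leadingCoeff_C] at h
    exact .of_forall fun x => by rwa [hP, eval_C]

theorem eventually_eval_nonpos_of_leadingCoeff_nonpos (h : P.leadingCoeff ≤ 0) :
    ∀ᶠ x in atTop, P.eval x ≤ 0 := by
  rcases h.lt_or_eq with h | h
  · exact (eventually_eval_pos_of_leadingCoeff_pos (P := -P) (by simpa)).mono
      fun x hx => by simpa using hx.le
  · simp [leadingCoeff_eq_zero.1 h]

theorem eventually_eval_pos_iff : (∀ᶠ x in atTop, 0 < P.eval x) ↔ 0 < P.leadingCoeff :=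
  ⟨fun h => not_le.1 fun hP => ((h.and (eventually_eval_nonpos_of_leadingCoeff_nonpos hP)).exists
    |>.elim fun _ hx => hx.1.not_ge hx.2), eventually_eval_pos_of_leadingCoeff_pos⟩

theorem eventuallyConst_eval_pos (P : 𝕜[X]) : EventuallyConst (fun x => 0 < P.eval x) atTop :=
  eventuallyConst_pred.2 <| (lt_or_ge 0 P.leadingCoeff).imp eventually_eval_pos_of_leadingCoeff_pos
    fun h => (eventually_eval_nonpos_of_leadingCoeff_nonpos h).mono fun _ => not_lt.2

end Polynomial

namespace OTerm

theorem map_eval {R S : Type*} [Semiring R] [Semiring S] (f : R →+* S) (v : ℕ → R) (t : OTerm) :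
    f (t.eval v) = t.eval (f ∘ v) := by
  induction t with
  | var => rfl
  | zero => exact map_zero f
  | one => exact map_one f
  | add t s iht ihs => simp only [eval, map_add, iht, ihs]
  | mul t s iht ihs => simp only [eval, map_mul, iht, ihs]

-- A list of terms, constant coefficient first, stands for a polynomial in one distinguished
-- variable with coefficients that are terms in the other variables.

def addCoeffs : List OTerm → List OTerm → List OTerm
  | [], m => m
  | l, [] => l
  | a :: l, b :: m => a.add b :: addCoeffs l m

def mulCoeffs : List OTerm → List OTerm → List OTerm
  | [], _ => []
  | a :: l, m => addCoeffs (m.map a.mul) (zero :: mulCoeffs l m)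

def coeffs (i : ℕ) : OTerm → List OTerm
  | var j => if j = i then [zero, one] else [var j]
  | zero => []
  | one => [one]
  | add t s => addCoeffs (t.coeffs i) (s.coeffs i)
  | mul t s => mulCoeffs (t.coeffs i) (s.coeffs i)

section evalCoeffs

variable {R : Type*} [CommSemiring R] (v : ℕ → R)

noncomputable def evalCoeffs : List OTerm → R[X]
  | [] => 0
  | a :: l => C (a.eval v) + X * evalCoeffs l

theorem evalCoeffs_addCoeffs (l m : List OTerm) :
    evalCoeffs v (addCoeffs l m) = evalCoeffs v l + evalCoeffs v m := by
  fun_induction addCoeffs l m with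
  | case3 a l b m ih => simp only [evalCoeffs, ih, eval, C_add]; ring
  | _ => simp [evalCoeffs]

theorem evalCoeffs_map_mul (a : OTerm) (l : List OTerm) :
    evalCoeffs v (l.map a.mul) = C (a.eval v) * evalCoeffs v l := by
  induction l with
  | nil => simp [evalCoeffs]
  | cons b l ih => simp only [List.map_cons, evalCoeffs, ih, eval, C_mul]; ring

theorem evalCoeffs_mulCoeffs (l m : List OTerm) :
    evalCoeffs v (mulCoeffs l m) = evalCoeffs v l * evalCoeffs v m := by
  induction l with
  | nil => simp [mulCoeffs, evalCoeffs]
  | cons a l ih =>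
    simp only [mulCoeffs, evalCoeffs_addCoeffs, evalCoeffs_map_mul, evalCoeffs, ih, eval, C_0]
    ring

theorem eval_evalCoeffs_coeffs (i : ℕ) (x : R) (t : OTerm) :
    (evalCoeffs v (t.coeffs i)).eval x = t.eval (update v i x) := by
  induction t with
  | var j => by_cases h : j = i <;> simp [coeffs, evalCoeffs, eval, h]
  | zero => simp [coeffs, evalCoeffs, eval]
  | one => simp [coeffs, evalCoeffs, eval]
  | add t s iht ihs => simp [coeffs, evalCoeffs_addCoeffs, eval, iht, ihs]
  | mul t s iht ihs => simp [coeffs, evalCoeffs_mulCoeffs, eval, iht, ihs]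

end evalCoeffs

def zipCoeffs : List OTerm → List OTerm → List (OTerm × OTerm)
  | [], [] => []
  | a :: l, [] => (a, zero) :: zipCoeffs l []
  | [], b :: m => (zero, b) :: zipCoeffs [] m
  | a :: l, b :: m => (a, b) :: zipCoeffs l m

section diffPoly

variable {R : Type*} [CommRing R] (v : ℕ → R)

noncomputable def diffPoly : List (OTerm × OTerm) → R[X]
  | [] => 0
  | (a, b) :: ps => C (b.eval v - a.eval v) + X * diffPoly ps

theorem diffPoly_zipCoeffs (l m : List OTerm) :
    diffPoly v (zipCoeffs l m) = evalCoeffs v m - evalCoeffs v l := by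
  fun_induction zipCoeffs l m <;> simp_all [diffPoly, evalCoeffs, eval] <;> ring

end diffPoly

end OTerm

namespace FFormula

theorem sat_Q_iff {α : Type*} [Add α] [Mul α] [Zero α] [One α] [Preorder α] [IsDirectedOrder α]
    [Nonempty α] [NoMaxOrder α] (v : ℕ → α) (i : ℕ) (φ : FFormula) :
    (Q i φ).Sat α v ↔ ∀ᶠ x in atTop, φ.Sat α (update v i x) := by
  rw [atTop_basis_Ioi.eventually_iff]
  simp only [Sat, true_and, Set.mem_Ioi]

def IsQF : FFormula → Prop
  | eq _ _ | lt _ _ => True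
  | not φ => φ.IsQF
  | and φ ψ | or φ ψ => φ.IsQF ∧ ψ.IsQF
  | Q _ _ => False

def coeffsEq : List (OTerm × OTerm) → FFormula
  | [] => eq .zero .zero
  | (a, b) :: ps => and (eq a b) (coeffsEq ps)

def coeffsLt : List (OTerm × OTerm) → FFormula
  | [] => lt .zero .zero
  | (a, b) :: ps => or (coeffsLt ps) (and (coeffsEq ps) (lt a b))

def elimQ (i : ℕ) : FFormula → FFormula
  | eq t s => coeffsEq (OTerm.zipCoeffs (t.coeffs i) (s.coeffs i))
  | lt t s => coeffsLt (OTerm.zipCoeffs (t.coeffs i) (s.coeffs i))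
  | not φ => not (elimQ i φ)
  | and φ ψ => and (elimQ i φ) (elimQ i ψ)
  | or φ ψ => or (elimQ i φ) (elimQ i ψ)
  | Q j φ => Q i (Q j φ)

theorem isQF_coeffsEq (ps : List (OTerm × OTerm)) : (coeffsEq ps).IsQF := by
  induction ps with
  | nil => trivial
  | cons p ps ih => exact ⟨trivial, ih⟩

theorem isQF_coeffsLt (ps : List (OTerm × OTerm)) : (coeffsLt ps).IsQF := by
  induction ps with
  | nil => trivial
  | cons p ps ih => exact ⟨ih, isQF_coeffsEq ps, trivial⟩

theorem isQF_elimQ (i : ℕ) {φ : FFormula} (hφ : φ.IsQF) : (elimQ i φ).IsQF := by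
  induction φ with
  | eq t s => exact isQF_coeffsEq _
  | lt t s => exact isQF_coeffsLt _
  | not φ ih => exact ih hφ
  | and φ ψ ihφ ihψ => exact ⟨ihφ hφ.1, ihψ hφ.2⟩
  | or φ ψ ihφ ihψ => exact ⟨ihφ hφ.1, ihψ hφ.2⟩
  | Q => exact hφ.elim

def toQF : FFormula → FFormula
  | eq t s => eq t s
  | lt t s => lt t s
  | not φ => not (toQF φ)
  | and φ ψ => and (toQF φ) (toQF ψ)
  | or φ ψ => or (toQF φ) (toQF ψ)
  | Q i φ => elimQ i (toQF φ)

theorem isQF_toQF (φ : FFormula) : (toQF φ).IsQF := by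
  induction φ with
  | eq | lt => trivial
  | not φ ih => exact ih
  | and φ ψ ihφ ihψ | or φ ψ ihφ ihψ => exact ⟨ihφ, ihψ⟩
  | Q i φ ih => exact isQF_elimQ i ih

section CommRing

variable {R : Type*} [CommRing R] [LT R] (v : ℕ → R)

theorem sat_coeffsEq (ps : List (OTerm × OTerm)) :
    (coeffsEq ps).Sat R v ↔ OTerm.diffPoly v ps = 0 := by
  induction ps with
  | nil => simp [coeffsEq, Sat, OTerm.diffPoly]
  | cons p ps ih =>
    obtain ⟨a, b⟩ := p
    simp only [coeffsEq, Sat, OTerm.diffPoly, C_add_X_mul_eq_zero, ih, sub_eq_zero]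
    exact and_congr_left' eq_comm

theorem sat_eq_update_iff (i : ℕ) (x : R) (t s : OTerm) :
    (eq t s).Sat R (update v i x) ↔
      (OTerm.diffPoly v (OTerm.zipCoeffs (t.coeffs i) (s.coeffs i))).eval x = 0 := by
  rw [OTerm.diffPoly_zipCoeffs, eval_sub, sub_eq_zero, OTerm.eval_evalCoeffs_coeffs,
    OTerm.eval_evalCoeffs_coeffs, eq_comm]
  rfl

end CommRing

section OrderedRing

variable {R : Type*} [CommRing R] [LinearOrder R] [IsStrictOrderedRing R] (v : ℕ → R)

theorem sat_coeffsLt (ps : List (OTerm × OTerm)) :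
    (coeffsLt ps).Sat R v ↔ 0 < (OTerm.diffPoly v ps).leadingCoeff := by
  induction ps with
  | nil => simp [coeffsLt, Sat, OTerm.diffPoly]
  | cons p ps ih =>
    obtain ⟨a, b⟩ := p
    simp only [coeffsLt, Sat, OTerm.diffPoly, ih, sat_coeffsEq]
    by_cases h : OTerm.diffPoly v ps = 0
    · simp only [h, leadingCoeff_zero, lt_irrefl, false_or, true_and, mul_zero, add_zero,
        leadingCoeff_C, sub_pos]
    · simp only [h, false_and, or_false, leadingCoeff_C_add_X_mul _ h]

theorem sat_lt_update_iff (i : ℕ) (x : R) (t s : OTerm) :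
    (lt t s).Sat R (update v i x) ↔
      0 < (OTerm.diffPoly v (OTerm.zipCoeffs (t.coeffs i) (s.coeffs i))).eval x := by
  rw [OTerm.diffPoly_zipCoeffs, eval_sub, sub_pos, OTerm.eval_evalCoeffs_coeffs,
    OTerm.eval_evalCoeffs_coeffs]
  rfl

end OrderedRing

section OrderedField

variable {𝕜 : Type*} [NormedField 𝕜] [LinearOrder 𝕜] [IsStrictOrderedRing 𝕜] [OrderTopology 𝕜]
  (v : ℕ → 𝕜)

theorem eventuallyConst_sat_update_of_isQF {φ : FFormula} (hφ : φ.IsQF) (i : ℕ) :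
    EventuallyConst (fun x => φ.Sat 𝕜 (update v i x)) atTop := by
  induction φ with
  | eq t s => simpa only [sat_eq_update_iff] using eventuallyConst_eval_eq_zero _
  | lt t s => simpa only [sat_lt_update_iff] using eventuallyConst_eval_pos _
  | not φ ih => exact (ih hφ).comp Not
  | and φ ψ ihφ ihψ => exact (ihφ hφ.1).comp₂ And (ihψ hφ.2)
  | or φ ψ ihφ ihψ => exact (ihφ hφ.1).comp₂ Or (ihψ hφ.2)
  | Q => exact hφ.elim

theorem sat_elimQ {φ : FFormula} (hφ : φ.IsQF) (i : ℕ) :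
    (elimQ i φ).Sat 𝕜 v ↔ ∀ᶠ x in atTop, φ.Sat 𝕜 (update v i x) := by
  induction φ with
  | eq t s => simp only [elimQ, sat_coeffsEq, sat_eq_update_iff, eventually_eval_eq_zero_iff]
  | lt t s => simp only [elimQ, sat_coeffsLt, sat_lt_update_iff, eventually_eval_pos_iff]
  | not φ ih =>
    simp only [elimQ, Sat, ih hφ]
    exact (eventuallyConst_sat_update_of_isQF (φ := φ) v hφ i).eventually_not_iff.symm
  | and φ ψ ihφ ihψ => simp only [elimQ, Sat, ihφ hφ.1, ihψ hφ.2, eventually_and]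
  | or φ ψ ihφ ihψ =>
    simp only [elimQ, Sat, ihφ hφ.1, ihψ hφ.2,
      (eventuallyConst_sat_update_of_isQF v hφ.1 i).eventually_or_iff]
  | Q => exact hφ.elim

theorem sat_toQF (φ : FFormula) : (toQF φ).Sat 𝕜 v ↔ φ.Sat 𝕜 v := by
  induction φ generalizing v with
  | eq | lt => rfl
  | not φ ih => simp only [toQF, Sat, ih]
  | and φ ψ ihφ ihψ => simp only [toQF, Sat, ihφ, ihψ]
  | or φ ψ ihφ ihψ => simp only [toQF, Sat, ihφ, ihψ]
  | Q i φ ih => simp only [toQF, sat_elimQ v (isQF_toQF φ), sat_Q_iff, ih]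

theorem eventuallyConst_sat_update (φ : FFormula) (i : ℕ) :
    EventuallyConst (fun x => φ.Sat 𝕜 (update v i x)) atTop := by
  simpa only [sat_toQF] using eventuallyConst_sat_update_of_isQF v (isQF_toQF φ) i

end OrderedField

end FFormula

/-- `ℕ` is an `F`-elementary substructure of `ℝ`. -/
theorem nat_F_elementary_substructure_real (φ : FFormula) (v : ℕ → ℕ) :
    φ.Sat ℕ v ↔ φ.Sat ℝ (fun i => ((v i : ℕ) : ℝ)) := by
  induction φ generalizing v with
  | eq t s =>
    simp only [FFormula.Sat, ← Nat.cast_inj (R := ℝ), ← Nat.coe_castRingHom, OTerm.map_eval]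
    rfl
  | lt t s =>
    simp only [FFormula.Sat, ← Nat.cast_lt (α := ℝ), ← Nat.coe_castRingHom, OTerm.map_eval]
    rfl
  | not φ ih => simp only [FFormula.Sat, ih]
  | and φ ψ ihφ ihψ => simp only [FFormula.Sat, ihφ, ihψ]
  | or φ ψ ihφ ihψ => simp only [FFormula.Sat, ihφ, ihψ]
  | Q i φ ih =>
    rw [FFormula.sat_Q_iff, FFormula.sat_Q_iff,
      ← (FFormula.eventuallyConst_sat_update _ φ i).eventually_comp_iff tendsto_natCast_atTop_atTop]
    simp only [ih, Function.apply_update (fun _ => (Nat.cast : ℕ → ℝ))]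
end

section
/- Every F-sentence (sentence built from quantifier-free formulas of ordered ring language using Boolean connectives and the quantifier Q = 'for all sufficiently large') true in ℕ is true in ℝ, and conversely; in particular ℕ and ℝ have the same F-theory. -/
/-- Free variables of a term. -/
def OTerm.freeVars : OTerm → Finset ℕ
  | .var i => {i}
  | .zero => ∅
  | .one => ∅
  | .add t s => t.freeVars ∪ s.freeVars
  | .mul t s => t.freeVars ∪ s.freeVars

/-- Free variables of an `F`-formula; `Q i` binds the variable `i`. -/
def FFormula.freeVars : FFormula → Finset ℕ
  | .eq t s => t.freeVars ∪ s.freeVars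
  | .lt t s => t.freeVars ∪ s.freeVars
  | .not φ => φ.freeVars
  | .and φ ψ => φ.freeVars ∪ ψ.freeVars
  | .or φ ψ => φ.freeVars ∪ ψ.freeVars
  | .Q i φ => φ.freeVars.erase i

/-- An `F`-sentence is an `F`-formula with no free variables. -/
def FFormula.IsSentence (φ : FFormula) : Prop := φ.freeVars = ∅

namespace NRF
open Polynomial Filter

/-! ### Term machinery -/

/-- Degree bound of a term in variable `i`. -/
def deg (i : ℕ) : OTerm → ℕ
  | .var j => if j = i then 1 else 0
  | .zero => 0
  | .one => 0
  | .add t s => max (deg i t) (deg i s)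
  | .mul t s => deg i t + deg i s

/-- Sum of a list of terms. -/
def sumL : List OTerm → OTerm
  | [] => .zero
  | t :: l => .add t (sumL l)

/-- `coeffT i t j` : a term whose value is the coefficient of `xᵢ^j` in `t`
viewed as a polynomial in the variable `i`. -/
def coeffT (i : ℕ) : OTerm → ℕ → OTerm
  | .var k, j => if k = i then (if j = 1 then .one else .zero)
      else (if j = 0 then .var k else .zero)
  | .zero, _ => .zero
  | .one, j => if j = 0 then .one else .zero
  | .add t s, j => .add (coeffT i t j) (coeffT i s j)
  | .mul t s, j => sumL ((List.range (j+1)).map fun a => .mul (coeffT i t a) (coeffT i s (j - a)))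

/-- Interpret a term as a real polynomial in the variable `i`. -/
noncomputable def toPolyR (v : ℕ → ℝ) (i : ℕ) : OTerm → Polynomial ℝ
  | .var k => if k = i then X else C (v k)
  | .zero => 0
  | .one => 1
  | .add t s => toPolyR v i t + toPolyR v i s
  | .mul t s => toPolyR v i t * toPolyR v i s

lemma eval_toPolyR (v : ℕ → ℝ) (i : ℕ) (x : ℝ) :
    ∀ t : OTerm, (toPolyR v i t).eval x = t.eval (Function.update v i x)
  | .var k => by
    by_cases h : k = i <;> simp [toPolyR, OTerm.eval, h, Function.update]
  | .zero => by simp [toPolyR, OTerm.eval]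
  | .one => by simp [toPolyR, OTerm.eval]
  | .add t s => by simp [toPolyR, OTerm.eval, eval_toPolyR v i x t, eval_toPolyR v i x s]
  | .mul t s => by simp [toPolyR, OTerm.eval, eval_toPolyR v i x t, eval_toPolyR v i x s]

lemma sumL_eval (v : ℕ → ℝ) : ∀ l : List OTerm, (sumL l).eval v = (l.map (OTerm.eval v)).sum
  | [] => by simp [sumL, OTerm.eval]
  | t :: l => by simp [sumL, OTerm.eval, sumL_eval v l]

lemma range_map_sum (f : ℕ → ℝ) : ∀ n, ((List.range n).map f).sum = ∑ a ∈ Finset.range n, f a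
  | 0 => by simp
  | n+1 => by
    rw [List.range_succ]
    simp [range_map_sum f n, Finset.sum_range_succ]

lemma eval_coeffT (v : ℕ → ℝ) (i : ℕ) :
    ∀ (t : OTerm) (j : ℕ), (coeffT i t j).eval v = (toPolyR v i t).coeff j
  | .var k, j => by
    by_cases h : k = i
    · by_cases h1 : j = 1 <;> simp [coeffT, toPolyR, OTerm.eval, h, h1, coeff_X, eq_comm]
    · by_cases h0 : j = 0 <;> simp [coeffT, toPolyR, OTerm.eval, h, h0, coeff_C]
  | .zero, j => by simp [coeffT, toPolyR, OTerm.eval]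
  | .one, j => by
    by_cases h0 : j = 0 <;> simp [coeffT, toPolyR, OTerm.eval, h0, coeff_one]
  | .add t s, j => by
    simp [coeffT, toPolyR, OTerm.eval, eval_coeffT v i t j, eval_coeffT v i s j]
  | .mul t s, j => by
    rw [coeffT, sumL_eval, List.map_map]
    have : ((List.range (j+1)).map (OTerm.eval v ∘ fun a => OTerm.mul (coeffT i t a) (coeffT i s (j - a)))).sum
        = ∑ a ∈ Finset.range (j+1), (toPolyR v i t).coeff a * (toPolyR v i s).coeff (j - a) := by
      rw [range_map_sum]
      refine Finset.sum_congr rfl fun a _ => ?_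
      simp [OTerm.eval, eval_coeffT v i t a, eval_coeffT v i s (j - a)]
    rw [this, toPolyR, coeff_mul, Finset.Nat.sum_antidiagonal_eq_sum_range_succ_mk]

lemma natDegree_toPolyR_le (v : ℕ → ℝ) (i : ℕ) :
    ∀ t : OTerm, (toPolyR v i t).natDegree ≤ deg i t
  | .var k => by
    by_cases h : k = i <;> simp [toPolyR, deg, h, natDegree_X_le]
  | .zero => by simp [toPolyR, deg]
  | .one => by simp [toPolyR, deg]
  | .add t s => by
    refine (natDegree_add_le _ _).trans ?_
    exact max_le_max (natDegree_toPolyR_le v i t) (natDegree_toPolyR_le v i s)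
  | .mul t s => by
    refine (natDegree_mul_le).trans ?_
    exact add_le_add (natDegree_toPolyR_le v i t) (natDegree_toPolyR_le v i s)

/-! ### Quantifier-free formulas and Boolean combinators -/

inductive QF : FFormula → Prop
  | eq (t s : OTerm) : QF (.eq t s)
  | lt (t s : OTerm) : QF (.lt t s)
  | not {φ} : QF φ → QF (.not φ)
  | and {φ ψ} : QF φ → QF ψ → QF (.and φ ψ)
  | or {φ ψ} : QF φ → QF ψ → QF (.or φ ψ)

def bigAnd : List FFormula → FFormula
  | [] => .eq .zero .zero
  | φ :: l => .and φ (bigAnd l)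

def bigOr : List FFormula → FFormula
  | [] => .lt .zero .zero
  | φ :: l => .or φ (bigOr l)

lemma sat_bigAnd (v : ℕ → ℝ) : ∀ l : List FFormula,
    ((bigAnd l).Sat ℝ v ↔ ∀ φ ∈ l, φ.Sat ℝ v)
  | [] => by simp [bigAnd, FFormula.Sat, OTerm.eval]
  | φ :: l => by simp [bigAnd, FFormula.Sat, sat_bigAnd v l]

lemma sat_bigOr (v : ℕ → ℝ) : ∀ l : List FFormula,
    ((bigOr l).Sat ℝ v ↔ ∃ φ ∈ l, φ.Sat ℝ v)
  | [] => by simp [bigOr, FFormula.Sat, OTerm.eval]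
  | φ :: l => by simp [bigOr, FFormula.Sat, sat_bigOr v l]

lemma qf_bigAnd {l : List FFormula} (h : ∀ φ ∈ l, QF φ) : QF (bigAnd l) := by
  induction l with
  | nil => exact QF.eq _ _
  | cons φ l ih => exact QF.and (h φ (by simp)) (ih fun ψ hψ => h ψ (by simp [hψ]))

lemma qf_bigOr {l : List FFormula} (h : ∀ φ ∈ l, QF φ) : QF (bigOr l) := by
  induction l with
  | nil => exact QF.lt _ _
  | cons φ l ih => exact QF.or (h φ (by simp)) (ih fun ψ hψ => h ψ (by simp [hψ]))

/-! ### Polynomial sign facts -/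

lemma ev_ne {r : ℝ[X]} (hr : r ≠ 0) : ∀ᶠ x in atTop, r.eval x ≠ 0 := by
  obtain ⟨b, hb⟩ := (Polynomial.finite_setOf_isRoot hr).bddAbove
  filter_upwards [eventually_gt_atTop b] with x hx h0
  exact absurd (hb (show x ∈ {x | r.IsRoot x} from h0)) (not_le.mpr hx)

lemma ev_pos {r : ℝ[X]} (hr : r ≠ 0) (hl : 0 < r.leadingCoeff) :
    ∀ᶠ x in atTop, 0 < r.eval x := by
  rcases Nat.eq_zero_or_pos r.natDegree with h0 | hpos
  · have hc : r = C (r.coeff 0) := r.eq_C_of_natDegree_eq_zero h0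
    have : 0 < r.coeff 0 := by
      have : r.leadingCoeff = r.coeff 0 := by rw [Polynomial.leadingCoeff, h0]
      rwa [this] at hl
    refine Filter.Eventually.of_forall fun x => ?_
    rw [hc]; simpa using this
  · have hdeg : 0 < r.degree := natDegree_pos_iff_degree_pos.mp hpos
    exact (r.tendsto_atTop_of_leadingCoeff_nonneg hdeg hl.le).eventually_gt_atTop 0

lemma evpos_iff (r : ℝ[X]) :
    (∀ᶠ x in atTop, 0 < r.eval x) ↔ (r ≠ 0 ∧ 0 < r.leadingCoeff) := by
  constructor
  · intro h
    rcases eq_or_ne r 0 with rfl | hr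
    · obtain ⟨x, hx⟩ := h.exists
      simp at hx
    refine ⟨hr, ?_⟩
    rcases lt_trichotomy 0 r.leadingCoeff with hp | hz | hn
    · exact hp
    · exact absurd hz.symm (leadingCoeff_ne_zero.mpr hr)
    · have hneg : 0 < (-r).leadingCoeff := by simpa using hn
      have := ev_pos (neg_ne_zero.mpr hr) hneg
      obtain ⟨x, hx1, hx2⟩ := (h.and this).exists
      simp only [eval_neg] at hx2
      linarith
  · rintro ⟨hr, hl⟩; exact ev_pos hr hl

lemma lex_iff {r : ℝ[X]} {D : ℕ} (hD : r.natDegree ≤ D) :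
    (∃ k ≤ D, 0 < r.coeff k ∧ ∀ j, k < j → j ≤ D → r.coeff j = 0) ↔
      (r ≠ 0 ∧ 0 < r.leadingCoeff) := by
  constructor
  · rintro ⟨k, hkD, hpos, hhigh⟩
    have hr : r ≠ 0 := fun h => by simp [h] at hpos
    have hdeg : r.natDegree ≤ k := by
      by_contra h
      push_neg at h
      exact (leadingCoeff_ne_zero.mpr hr) (hhigh r.natDegree h hD)
    have hk : r.natDegree = k :=
      le_antisymm hdeg (le_natDegree_of_ne_zero (ne_of_gt hpos))
    exact ⟨hr, by rw [Polynomial.leadingCoeff, hk]; exact hpos⟩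
  · rintro ⟨hr, hpos⟩
    exact ⟨r.natDegree, hD, by rwa [coeff_natDegree], fun j hj _ =>
      coeff_eq_zero_of_natDegree_lt hj⟩

/-! ### The eventual-value formulas -/

def Dg (i : ℕ) (t s : OTerm) : ℕ := max (deg i t) (deg i s)

def EvEq (i : ℕ) (t s : OTerm) : FFormula :=
  bigAnd ((List.range (Dg i t s + 1)).map fun j => .eq (coeffT i t j) (coeffT i s j))

def EvLt (i : ℕ) (t s : OTerm) : FFormula :=
  bigOr ((List.range (Dg i t s + 1)).map fun k =>
    .and (.lt (coeffT i t k) (coeffT i s k))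
      (bigAnd (((List.range (Dg i t s + 1)).filter fun j => k < j).map
        fun j => .eq (coeffT i t j) (coeffT i s j))))

lemma qf_EvEq (i : ℕ) (t s : OTerm) : QF (EvEq i t s) := by
  apply qf_bigAnd; intro φ hφ
  simp only [List.mem_map] at hφ
  obtain ⟨j, _, rfl⟩ := hφ
  exact QF.eq _ _

lemma qf_EvLt (i : ℕ) (t s : OTerm) : QF (EvLt i t s) := by
  apply qf_bigOr; intro φ hφ
  simp only [List.mem_map] at hφ
  obtain ⟨k, _, rfl⟩ := hφ
  refine QF.and (QF.lt _ _) (qf_bigAnd fun ψ hψ => ?_)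
  simp only [List.mem_map] at hψ
  obtain ⟨j, _, rfl⟩ := hψ
  exact QF.eq _ _

lemma sat_EvEq (i : ℕ) (t s : OTerm) (v : ℕ → ℝ) :
    (EvEq i t s).Sat ℝ v ↔
      ∀ j ≤ Dg i t s, (toPolyR v i t).coeff j = (toPolyR v i s).coeff j := by
  rw [EvEq, sat_bigAnd]
  simp [List.mem_map, List.mem_range, FFormula.Sat, eval_coeffT, Nat.lt_succ_iff]

lemma sat_EvLt (i : ℕ) (t s : OTerm) (v : ℕ → ℝ) :
    (EvLt i t s).Sat ℝ v ↔
      ∃ k ≤ Dg i t s, (toPolyR v i t).coeff k < (toPolyR v i s).coeff k ∧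
        ∀ j, k < j → j ≤ Dg i t s →
          (toPolyR v i t).coeff j = (toPolyR v i s).coeff j := by
  rw [EvLt, sat_bigOr]
  constructor
  · rintro ⟨φ, hφ, hsat⟩
    simp only [List.mem_map, List.mem_range, Nat.lt_succ_iff] at hφ
    obtain ⟨k, hk, rfl⟩ := hφ
    obtain ⟨h1, h2⟩ := hsat
    rw [sat_bigAnd] at h2
    refine ⟨k, hk, by simpa [FFormula.Sat, eval_coeffT] using h1, fun j hj hjD => ?_⟩
    have := h2 (.eq (coeffT i t j) (coeffT i s j)) (by
      simp only [List.mem_map, List.mem_filter, List.mem_range, Nat.lt_succ_iff]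
      exact ⟨j, ⟨hjD, by simpa using hj⟩, rfl⟩)
    simpa [FFormula.Sat, eval_coeffT] using this
  · rintro ⟨k, hk, h1, h2⟩
    refine ⟨_, List.mem_map.mpr ⟨k, by simp [Nat.lt_succ_iff, hk], rfl⟩, ?_⟩
    refine ⟨by simpa [FFormula.Sat, eval_coeffT] using h1, ?_⟩
    rw [sat_bigAnd]
    intro ψ hψ
    simp only [List.mem_map, List.mem_filter, List.mem_range, Nat.lt_succ_iff] at hψ
    obtain ⟨j, ⟨hjD, hkj⟩, rfl⟩ := hψ
    simpa [FFormula.Sat, eval_coeffT] using h2 j (by simpa using hkj) hjD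

/-! ### Q-satisfaction as an `atTop` eventuality -/

lemma sat_Q_iff (i : ℕ) (φ : FFormula) (v : ℕ → ℝ) :
    (FFormula.Q i φ).Sat ℝ v ↔ ∀ᶠ x in atTop, φ.Sat ℝ (Function.update v i x) := by
  simp only [FFormula.Sat, eventually_atTop]
  constructor
  · rintro ⟨z, hz⟩; exact ⟨z + 1, fun x hx => hz x (by linarith)⟩
  · rintro ⟨a, ha⟩; exact ⟨a, fun x hx => ha x hx.le⟩

/-! ### Eventual behaviour of atoms -/

lemma ev_eq_atom (i : ℕ) (t s : OTerm) (v : ℕ → ℝ) :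
    (∀ᶠ x in atTop, (FFormula.eq t s).Sat ℝ (Function.update v i x)) ↔
      toPolyR v i t = toPolyR v i s := by
  constructor
  · intro h
    by_contra hne
    have hr : toPolyR v i s - toPolyR v i t ≠ 0 := sub_ne_zero.mpr (Ne.symm hne)
    obtain ⟨x, hx1, hx2⟩ := (h.and (ev_ne hr)).exists
    apply hx2
    simp only [eval_sub]
    rw [eval_toPolyR, eval_toPolyR]
    simp only [FFormula.Sat] at hx1
    rw [hx1]; ring
  · intro h
    refine Filter.Eventually.of_forall fun x => ?_
    show t.eval (Function.update v i x) = s.eval (Function.update v i x)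
    rw [← eval_toPolyR, ← eval_toPolyR, h]

lemma ev_lt_atom (i : ℕ) (t s : OTerm) (v : ℕ → ℝ) :
    (∀ᶠ x in atTop, (FFormula.lt t s).Sat ℝ (Function.update v i x)) ↔
      (toPolyR v i s - toPolyR v i t ≠ 0 ∧
        0 < (toPolyR v i s - toPolyR v i t).leadingCoeff) := by
  rw [← evpos_iff]
  apply eventually_congr
  refine Filter.Eventually.of_forall fun x => ?_
  show (t.eval (Function.update v i x) < s.eval (Function.update v i x)) ↔ _
  rw [← eval_toPolyR, ← eval_toPolyR, eval_sub]
  constructor <;> intro h <;> linarith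

/-! ### Eventual constancy of QF formulas -/

lemma evConst (i : ℕ) (v : ℕ → ℝ) :
    ∀ φ : FFormula, QF φ →
      (∀ᶠ x in atTop, φ.Sat ℝ (Function.update v i x)) ∨
      (∀ᶠ x in atTop, ¬ φ.Sat ℝ (Function.update v i x)) := by
  intro φ hφ
  induction hφ with
  | eq t s =>
    by_cases h : toPolyR v i t = toPolyR v i s
    · exact Or.inl ((ev_eq_atom i t s v).mpr h)
    · right
      have hr : toPolyR v i s - toPolyR v i t ≠ 0 := sub_ne_zero.mpr (Ne.symm h)
      filter_upwards [ev_ne hr] with x hx hsat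
      apply hx
      simp only [FFormula.Sat] at hsat
      simp only [eval_sub]
      rw [eval_toPolyR, eval_toPolyR, hsat]; ring
  | lt t s =>
    set r := toPolyR v i s - toPolyR v i t with hrdef
    rcases eq_or_ne r 0 with hz | hr
    · right
      refine Filter.Eventually.of_forall fun x => ?_
      intro hsat
      simp only [FFormula.Sat] at hsat
      have : r.eval x = 0 := by rw [hz]; simp
      rw [hrdef] at this
      simp only [eval_sub] at this
      rw [eval_toPolyR, eval_toPolyR] at this
      linarith
    · rcases lt_trichotomy 0 r.leadingCoeff with hp | h0 | hn
      · left
        filter_upwards [ev_pos hr hp] with x hx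
        show t.eval _ < s.eval _
        rw [hrdef] at hx
        simp only [eval_sub] at hx
        rw [eval_toPolyR, eval_toPolyR] at hx
        linarith
      · exact absurd h0.symm (leadingCoeff_ne_zero.mpr hr)
      · right
        have hneg : 0 < (-r).leadingCoeff := by simpa using hn
        filter_upwards [ev_pos (neg_ne_zero.mpr hr) hneg] with x hx hsat
        simp only [FFormula.Sat] at hsat
        rw [hrdef] at hx
        simp only [eval_neg, eval_sub] at hx
        rw [eval_toPolyR, eval_toPolyR] at hx
        linarith
  | not hψ ih =>
    rcases ih with h | h
    · right; filter_upwards [h] with x hx; simp [FFormula.Sat, hx]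
    · left; filter_upwards [h] with x hx; simpa [FFormula.Sat] using hx
  | and hψ hχ ih₁ ih₂ =>
    rcases ih₁ with h1 | h1
    · rcases ih₂ with h2 | h2
      · left; filter_upwards [h1, h2] with x hx1 hx2; exact ⟨hx1, hx2⟩
      · right; filter_upwards [h2] with x hx2 hsat; exact hx2 hsat.2
    · right; filter_upwards [h1] with x hx1 hsat; exact hx1 hsat.1
  | or hψ hχ ih₁ ih₂ =>
    rcases ih₁ with h1 | h1
    · left; filter_upwards [h1] with x hx1; exact Or.inl hx1
    · rcases ih₂ with h2 | h2
      · left; filter_upwards [h2] with x hx2; exact Or.inr hx2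
      · right; filter_upwards [h1, h2] with x hx1 hx2 hsat
        rcases hsat with h | h
        · exact hx1 h
        · exact hx2 h

/-! ### Eliminating one `Q` from a QF formula -/

lemma elimQ (i : ℕ) :
    ∀ φ : FFormula, QF φ → ∃ ψ : FFormula, QF ψ ∧ ∀ v : ℕ → ℝ,
      (ψ.Sat ℝ v ↔ ∀ᶠ x in atTop, φ.Sat ℝ (Function.update v i x)) := by
  intro φ hφ
  induction hφ with
  | eq t s =>
    refine ⟨EvEq i t s, qf_EvEq i t s, fun v => ?_⟩
    rw [sat_EvEq, ev_eq_atom]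
    constructor
    · intro h
      ext j
      by_cases hj : j ≤ Dg i t s
      · exact h j hj
      · push_neg at hj
        rw [coeff_eq_zero_of_natDegree_lt, coeff_eq_zero_of_natDegree_lt]
        · exact lt_of_le_of_lt ((natDegree_toPolyR_le v i s).trans (le_max_right _ _)) hj
        · exact lt_of_le_of_lt ((natDegree_toPolyR_le v i t).trans (le_max_left _ _)) hj
    · intro h j _; rw [h]
  | lt t s =>
    refine ⟨EvLt i t s, qf_EvLt i t s, fun v => ?_⟩
    rw [sat_EvLt, ev_lt_atom]
    have hDp : (toPolyR v i s - toPolyR v i t).natDegree ≤ Dg i t s := by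
      refine (natDegree_sub_le _ _).trans ?_
      exact max_le ((natDegree_toPolyR_le v i s).trans (le_max_right _ _))
        ((natDegree_toPolyR_le v i t).trans (le_max_left _ _))
    rw [← lex_iff hDp]
    constructor
    · rintro ⟨k, hk, h1, h2⟩
      exact ⟨k, hk, by simp only [coeff_sub]; linarith, fun j hj hjD => by
        simp only [coeff_sub]; rw [h2 j hj hjD]; ring⟩
    · rintro ⟨k, hk, h1, h2⟩
      refine ⟨k, hk, ?_, fun j hj hjD => ?_⟩
      · simp only [coeff_sub] at h1; linarith
      · have := h2 j hj hjD
        simp only [coeff_sub] at this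
        linarith
  | not hψ ih =>
    obtain ⟨ψ', hq, hs⟩ := ih
    refine ⟨.not ψ', QF.not hq, fun v => ?_⟩
    have hec := evConst i v _ hψ
    show ¬ ψ'.Sat ℝ v ↔ _
    rw [hs v]
    rcases hec with h | h
    · constructor
      · intro hcon; exact (hcon h).elim
      · intro hev
        obtain ⟨x, hx1, hx2⟩ := (h.and hev).exists
        simp only [FFormula.Sat] at hx2
        exact (hx2 hx1).elim
    · constructor
      · intro _
        filter_upwards [h] with x hx
        simp only [FFormula.Sat]
        exact hx
      · intro hev hall
        obtain ⟨x, hx1, hx2⟩ := (hall.and hev).exists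
        simp only [FFormula.Sat] at hx2
        exact hx2 hx1
  | and hψ hχ ih₁ ih₂ =>
    obtain ⟨ψ₁, hq₁, hs₁⟩ := ih₁
    obtain ⟨ψ₂, hq₂, hs₂⟩ := ih₂
    refine ⟨.and ψ₁ ψ₂, QF.and hq₁ hq₂, fun v => ?_⟩
    show (ψ₁.Sat ℝ v ∧ ψ₂.Sat ℝ v) ↔ _
    rw [hs₁ v, hs₂ v, ← eventually_and]
    rfl
  | or hψ hχ ih₁ ih₂ =>
    obtain ⟨ψ₁, hq₁, hs₁⟩ := ih₁
    obtain ⟨ψ₂, hq₂, hs₂⟩ := ih₂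
    refine ⟨.or ψ₁ ψ₂, QF.or hq₁ hq₂, fun v => ?_⟩
    show (ψ₁.Sat ℝ v ∨ ψ₂.Sat ℝ v) ↔ _
    rw [hs₁ v, hs₂ v]
    constructor
    · rintro (h | h)
      · filter_upwards [h] with x hx; exact Or.inl hx
      · filter_upwards [h] with x hx; exact Or.inr hx
    · intro h
      rcases evConst i v _ hψ with h1 | h1
      · exact Or.inl h1
      · right
        filter_upwards [h, h1] with x hx hx1
        rcases hx with hx | hx
        · exact absurd hx hx1
        · exact hx

/-! ### Full quantifier elimination over `ℝ` -/

lemma mainQE : ∀ φ : FFormula, ∃ ψ : FFormula, QF ψ ∧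
    ∀ v : ℕ → ℝ, (φ.Sat ℝ v ↔ ψ.Sat ℝ v) := by
  intro φ
  induction φ with
  | eq t s => exact ⟨.eq t s, QF.eq t s, fun _ => Iff.rfl⟩
  | lt t s => exact ⟨.lt t s, QF.lt t s, fun _ => Iff.rfl⟩
  | not φ ih =>
    obtain ⟨ψ, hq, hs⟩ := ih
    exact ⟨.not ψ, QF.not hq, fun v => by
      show ¬ φ.Sat ℝ v ↔ ¬ ψ.Sat ℝ v
      rw [hs v]⟩
  | and φ χ ih₁ ih₂ =>
    obtain ⟨ψ₁, hq₁, hs₁⟩ := ih₁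
    obtain ⟨ψ₂, hq₂, hs₂⟩ := ih₂
    exact ⟨.and ψ₁ ψ₂, QF.and hq₁ hq₂, fun v => by
      show φ.Sat ℝ v ∧ χ.Sat ℝ v ↔ ψ₁.Sat ℝ v ∧ ψ₂.Sat ℝ v
      rw [hs₁ v, hs₂ v]⟩
  | or φ χ ih₁ ih₂ =>
    obtain ⟨ψ₁, hq₁, hs₁⟩ := ih₁
    obtain ⟨ψ₂, hq₂, hs₂⟩ := ih₂
    exact ⟨.or ψ₁ ψ₂, QF.or hq₁ hq₂, fun v => by
      show φ.Sat ℝ v ∨ χ.Sat ℝ v ↔ ψ₁.Sat ℝ v ∨ ψ₂.Sat ℝ v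
      rw [hs₁ v, hs₂ v]⟩
  | Q i φ ih =>
    obtain ⟨φ', hq', hs'⟩ := ih
    obtain ⟨ψ, hq, hs⟩ := elimQ i φ' hq'
    refine ⟨ψ, hq, fun v => ?_⟩
    rw [sat_Q_iff, hs v]
    apply eventually_congr
    exact Filter.Eventually.of_forall fun x => hs' _

/-- Eventual constancy for arbitrary F-formulas over `ℝ`. -/
lemma evConstF (φ : FFormula) (v : ℕ → ℝ) (i : ℕ) :
    (∀ᶠ x in atTop, φ.Sat ℝ (Function.update v i x)) ∨
    (∀ᶠ x in atTop, ¬ φ.Sat ℝ (Function.update v i x)) := by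
  obtain ⟨ψ, hq, hs⟩ := mainQE φ
  rcases evConst i v ψ hq with h | h
  · left; filter_upwards [h] with x hx; exact (hs _).mpr hx
  · right; filter_upwards [h] with x hx hsat; exact hx ((hs _).mp hsat)

/-! ### Transfer between `ℕ` and `ℝ` -/

lemma eval_cast (v : ℕ → ℕ) : ∀ t : OTerm, ((t.eval v : ℕ) : ℝ) = t.eval (fun j => (v j : ℝ))
  | .var j => by simp [OTerm.eval]
  | .zero => by simp [OTerm.eval]
  | .one => by simp [OTerm.eval]
  | .add t s => by push_cast [OTerm.eval]; rw [eval_cast v t, eval_cast v s]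
  | .mul t s => by push_cast [OTerm.eval]; rw [eval_cast v t, eval_cast v s]

lemma update_cast (v : ℕ → ℕ) (i n : ℕ) :
    (fun j => ((Function.update v i n j : ℕ) : ℝ)) =
      Function.update (fun j => (v j : ℝ)) i (n : ℝ) := by
  funext j
  by_cases h : j = i <;> simp [Function.update, h]

theorem transfer : ∀ (φ : FFormula) (v : ℕ → ℕ),
    φ.Sat ℕ v ↔ φ.Sat ℝ (fun j => (v j : ℝ)) := by
  intro φ
  induction φ with
  | eq t s =>
    intro v
    simp only [FFormula.Sat]
    rw [← eval_cast, ← eval_cast]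
    exact Nat.cast_inj.symm
  | lt t s =>
    intro v
    simp only [FFormula.Sat]
    rw [← eval_cast, ← eval_cast]
    exact Nat.cast_lt.symm
  | not φ ih =>
    intro v
    show ¬ φ.Sat ℕ v ↔ ¬ _
    rw [ih v]
  | and φ χ ih₁ ih₂ =>
    intro v
    show φ.Sat ℕ v ∧ χ.Sat ℕ v ↔ _ ∧ _
    rw [ih₁ v, ih₂ v]
  | or φ χ ih₁ ih₂ =>
    intro v
    show φ.Sat ℕ v ∨ χ.Sat ℕ v ↔ _ ∨ _
    rw [ih₁ v, ih₂ v]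
  | Q i φ ih =>
    intro v
    constructor
    · rintro ⟨z, hz⟩
      rcases evConstF φ (fun j => (v j : ℝ)) i with h | h
      · exact (sat_Q_iff i φ _).mpr h
      · exfalso
        rw [eventually_atTop] at h
        obtain ⟨a, ha⟩ := h
        obtain ⟨m, hm⟩ := exists_nat_ge a
        set n := max (z + 1) m with hn
        have hn1 : z < n := lt_of_lt_of_le (Nat.lt_succ_self z) (le_max_left _ _)
        have hsat : φ.Sat ℝ (Function.update (fun j => (v j : ℝ)) i (n : ℝ)) := by
          rw [← update_cast]
          exact (ih _).mp (hz n hn1)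
        refine ha (n : ℝ) ?_ hsat
        calc a ≤ (m : ℝ) := hm
        _ ≤ (n : ℝ) := by exact_mod_cast le_max_right _ _
    · rintro ⟨z, hz⟩
      obtain ⟨n₀, hn₀⟩ := exists_nat_gt z
      refine ⟨n₀, fun n hn => ?_⟩
      rw [ih _, update_cast]
      refine hz (n : ℝ) ?_
      calc z < (n₀ : ℝ) := hn₀
      _ < (n : ℝ) := by exact_mod_cast hn

end NRF

/-- `ℕ` and `ℝ` have the same `F`-theory. -/
theorem nat_real_same_F_theory (φ : FFormula) (hφ : φ.IsSentence) :
    φ.Sat ℕ (fun _ => 0) ↔ φ.Sat ℝ (fun _ => 0) := by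
  have h := NRF.transfer φ (fun _ => 0)
  simpa using h
end

section
/- Every F-formula is equivalent in ℕ to a quantifier-free formula of the language {+, ·, <, 0, 1}: for every F-formula φ(x₁,...,xₘ) there is a quantifier-free formula ψ(x₁,...,xₘ) such that for all naturals n₁,...,nₘ, ℕ ⊨ φ(n̄) iff ℕ ⊨ ψ(n̄). -/
/-- A formula is quantifier-free if it does not use the quantifier `Q`. -/
def FFormula.QuantifierFree : FFormula → Prop
  | .eq _ _ => True
  | .lt _ _ => True
  | .not φ => φ.QuantifierFree
  | .and φ ψ => φ.QuantifierFree ∧ ψ.QuantifierFree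
  | .or φ ψ => φ.QuantifierFree ∧ ψ.QuantifierFree
  | .Q _ _ => False

/- ---------------- Auxiliary development ---------------- -/

namespace FQE

open Filter

/-- Horner-style evaluation, constant coefficient first. -/
def evalN : List ℕ → ℕ → ℕ
  | [], _ => 0
  | c :: cs, x => c + evalN cs x * x

/-- Evaluation, leading coefficient first. -/
def evalT : List ℕ → ℕ → ℕ
  | [], _ => 0
  | a :: as, x => a * x ^ as.length + evalT as x

lemma evalT_append_single (l : List ℕ) (c x : ℕ) :
    evalT (l ++ [c]) x = evalT l x * x + c := by
  induction l with
  | nil => simp [evalT]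
  | cons a l ih =>
    simp only [List.cons_append, evalT, ih, List.length_append, List.length_cons,
      List.length_nil, List.append_eq, pow_succ, pow_zero]
    ring

lemma evalN_eq_evalT_reverse (l : List ℕ) (x : ℕ) :
    evalN l x = evalT l.reverse x := by
  induction l with
  | nil => rfl
  | cons c cs ih =>
    simp only [evalN, ih, List.reverse_cons, evalT_append_single]
    ring

lemma evalN_append (u w : List ℕ) (x : ℕ) :
    evalN (u ++ w) x = evalN u x + evalN w x * x ^ u.length := by
  induction u with
  | nil => simp [evalN]
  | cons c cs ih =>
    simp only [List.cons_append, evalN, List.append_eq, ih, List.length_cons, pow_succ]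
    ring

lemma evalN_replicate_zero (k x : ℕ) : evalN (List.replicate k 0) x = 0 := by
  induction k with
  | zero => rfl
  | succ n ih => simp [List.replicate_succ, evalN, ih]

/-- Pointwise addition of coefficient lists (of naturals). -/
def addN : List ℕ → List ℕ → List ℕ
  | [], l => l
  | l, [] => l
  | a :: as, b :: bs => (a + b) :: addN as bs

lemma evalN_addN (u w : List ℕ) (x : ℕ) :
    evalN (addN u w) x = evalN u x + evalN w x := by
  induction u generalizing w with
  | nil => simp [addN, evalN]
  | cons a as ih =>
    cases w with
    | nil => simp [addN, evalN]
    | cons b bs => simp only [addN, evalN, ih]; ring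

/-- Convolution product of coefficient lists. -/
def mulN : List ℕ → List ℕ → List ℕ
  | [], _ => []
  | a :: as, bs => addN (bs.map (a * ·)) (0 :: mulN as bs)

lemma evalN_map_mul (a : ℕ) (l : List ℕ) (x : ℕ) :
    evalN (l.map (a * ·)) x = a * evalN l x := by
  induction l with
  | nil => simp [evalN]
  | cons c cs ih => simp only [List.map_cons, evalN, ih]; ring

lemma evalN_mulN (u w : List ℕ) (x : ℕ) :
    evalN (mulN u w) x = evalN u x * evalN w x := by
  induction u with
  | nil => simp [mulN, evalN]
  | cons a as ih =>
    simp only [mulN, evalN_addN, evalN, ih, evalN_map_mul]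
    ring

/-- Pointwise addition of coefficient lists (of terms). -/
def addO : List OTerm → List OTerm → List OTerm
  | [], l => l
  | l, [] => l
  | a :: as, b :: bs => .add a b :: addO as bs

/-- Convolution product of coefficient lists (of terms). -/
def mulO : List OTerm → List OTerm → List OTerm
  | [], _ => []
  | a :: as, bs => addO (bs.map (.mul a)) (.zero :: mulO as bs)

lemma map_addO (v : ℕ → ℕ) (u w : List OTerm) :
    (addO u w).map (OTerm.eval v) = addN (u.map (OTerm.eval v)) (w.map (OTerm.eval v)) := by
  induction u generalizing w with
  | nil => cases w <;> simp [addO, addN]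
  | cons a as ih =>
    cases w with
    | nil => simp [addO, addN]
    | cons b bs => simp [addO, addN, ih, OTerm.eval]

lemma map_mulO (v : ℕ → ℕ) (u w : List OTerm) :
    (mulO u w).map (OTerm.eval v) = mulN (u.map (OTerm.eval v)) (w.map (OTerm.eval v)) := by
  induction u with
  | nil => simp [mulO, mulN]
  | cons a as ih =>
    simp only [mulO, mulN, map_addO, ih, List.map_cons, List.map_map]
    congr 1

/-- The coefficient list (constant first) of a term, as a polynomial in variable `i`. -/
def polyO (i : ℕ) : OTerm → List OTerm
  | .var j => if j = i then [.zero, .one] else [.var j]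
  | .zero => []
  | .one => [.one]
  | .add t s => addO (polyO i t) (polyO i s)
  | .mul t s => mulO (polyO i t) (polyO i s)

lemma polyO_correct (i : ℕ) (t : OTerm) (v : ℕ → ℕ) (x : ℕ) :
    t.eval (Function.update v i x) = evalN ((polyO i t).map (OTerm.eval v)) x := by
  induction t with
  | var j =>
    by_cases h : j = i
    · subst h; simp [polyO, OTerm.eval, evalN]
    · simp [polyO, h, OTerm.eval, evalN, Function.update_of_ne h]
  | zero => simp [polyO, OTerm.eval, evalN]
  | one => simp [polyO, OTerm.eval, evalN]
  | add t s iht ihs => simp [polyO, OTerm.eval, map_addO, evalN_addN, iht, ihs]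
  | mul t s iht ihs => simp [polyO, OTerm.eval, map_mulO, evalN_mulN, iht, ihs]

/-- Pad a coefficient list (constant first) with zero leading coefficients. -/
def padO (n : ℕ) (l : List OTerm) : List OTerm := l ++ List.replicate (n - l.length) .zero

lemma padO_length {n : ℕ} {l : List OTerm} (h : l.length ≤ n) : (padO n l).length = n := by
  simp [padO]; omega

lemma evalN_map_padO (n : ℕ) (l : List OTerm) (v : ℕ → ℕ) (x : ℕ) :
    evalN ((padO n l).map (OTerm.eval v)) x = evalN (l.map (OTerm.eval v)) x := by
  have : (List.replicate (n - l.length) OTerm.zero).map (OTerm.eval v)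
      = List.replicate (n - l.length) 0 := by
    simp [List.map_replicate, OTerm.eval]
  simp [padO, evalN_append, this, evalN_replicate_zero]

/-- Reversed (leading-coefficient-first) padded coefficient list. -/
def rcoeff (i n : ℕ) (t : OTerm) : List OTerm := (padO n (polyO i t)).reverse

lemma rcoeff_length {i n : ℕ} {t : OTerm} (h : (polyO i t).length ≤ n) :
    (rcoeff i n t).length = n := by
  simp [rcoeff, padO_length h]

lemma eval_eq_evalT (i n : ℕ) (t : OTerm) (h : (polyO i t).length ≤ n) (v : ℕ → ℕ) (x : ℕ) :
    t.eval (Function.update v i x) = evalT ((rcoeff i n t).map (OTerm.eval v)) x := by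
  rw [polyO_correct i t v x, ← evalN_map_padO n (polyO i t) v x,
    evalN_eq_evalT_reverse]
  simp [rcoeff]

/-- Lexicographic comparison (leading coefficient first, equal lengths). -/
def lexLt : List ℕ → List ℕ → Prop
  | a :: as, b :: bs => a < b ∨ (a = b ∧ lexLt as bs)
  | _, _ => False

lemma evalT_le {x : ℕ} (hx : 1 ≤ x) (l : List ℕ) :
    evalT l x ≤ l.sum * x ^ (l.length - 1) := by
  induction l with
  | nil => simp [evalT]
  | cons a as ih =>
    have h1 : x ^ (as.length - 1) ≤ x ^ as.length :=
      Nat.pow_le_pow_right hx (by omega)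
    calc evalT (a :: as) x = a * x ^ as.length + evalT as x := rfl
      _ ≤ a * x ^ as.length + as.sum * x ^ (as.length - 1) := by omega
      _ ≤ a * x ^ as.length + as.sum * x ^ as.length := by
          have := Nat.mul_le_mul_left as.sum h1; omega
      _ = (a :: as).sum * x ^ ((a :: as).length - 1) := by
          simp [List.sum_cons]; ring

lemma evalT_lt_pow {x : ℕ} (l : List ℕ) (h : l.sum < x) :
    evalT l x < x ^ l.length := by
  have hx : 1 ≤ x := by omega
  cases l with
  | nil => simpa [evalT] using Nat.one_pos
  | cons a as =>
    have h1 := evalT_le hx (a :: as)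
    simp only [List.length_cons, Nat.add_sub_cancel] at h1 ⊢
    have h2 : (a :: as).sum * x ^ as.length < x * x ^ as.length :=
      mul_lt_mul_of_pos_right h (Nat.pow_pos (by omega))
    have h3 : x * x ^ as.length = x ^ (as.length + 1) := (pow_succ' x as.length).symm
    omega

lemma lexLt_evalT {A B : List ℕ} (h : A.length = B.length) (hlex : lexLt A B) :
    ∀ x, A.sum < x → evalT A x < evalT B x := by
  induction A generalizing B with
  | nil => exact absurd hlex (by simp [lexLt])
  | cons a as ih =>
    cases B with
    | nil => simp at h
    | cons b bs =>
      intro x hx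
      have hlen : as.length = bs.length := by simpa using h
      have hsum : a + as.sum < x := by simpa [List.sum_cons] using hx
      rcases hlex with hab | ⟨hab, htail⟩
      · have h1 : evalT as x < x ^ as.length := evalT_lt_pow as (by omega)
        have h2 : (a + 1) * x ^ as.length ≤ b * x ^ bs.length := by
          rw [← hlen]; exact Nat.mul_le_mul_right _ (by omega)
        have h3 : evalT (a :: as) x = a * x ^ as.length + evalT as x := rfl
        have h4 : evalT (b :: bs) x = b * x ^ bs.length + evalT bs x := rfl
        have h5 : a * x ^ as.length + evalT as x < (a + 1) * x ^ as.length := by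
          have : (a + 1) * x ^ as.length = a * x ^ as.length + x ^ as.length := by ring
          omega
        omega
      · subst hab
        have := ih hlen htail x (by omega)
        have h3 : evalT (a :: as) x = a * x ^ as.length + evalT as x := rfl
        have h4 : evalT (a :: bs) x = a * x ^ bs.length + evalT bs x := rfl
        rw [h3, h4, hlen]
        omega

lemma lexLt_trichotomy {A B : List ℕ} (h : A.length = B.length) :
    lexLt A B ∨ A = B ∨ lexLt B A := by
  induction A generalizing B with
  | nil => cases B with
    | nil => simp
    | cons b bs => simp at h
  | cons a as ih =>
    cases B with
    | nil => simp at h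
    | cons b bs =>
      have hlen : as.length = bs.length := by simpa using h
      rcases lt_trichotomy a b with hab | hab | hab
      · exact Or.inl (Or.inl hab)
      · rcases ih hlen with ht | ht | ht
        · exact Or.inl (Or.inr ⟨hab, ht⟩)
        · exact Or.inr (Or.inl (by rw [hab, ht]))
        · exact Or.inr (Or.inr (Or.inr ⟨hab.symm, ht⟩))
      · exact Or.inr (Or.inr (Or.inl hab))

lemma lexLt_irrefl (A : List ℕ) : ¬ lexLt A A := fun h =>
  lt_irrefl _ (lexLt_evalT rfl h (A.sum + 1) (by omega))

lemma lexLt_asymm {A B : List ℕ} (h : A.length = B.length)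
    (h1 : lexLt A B) (h2 : lexLt B A) : False := by
  set x := max A.sum B.sum + 1 with hx
  have e1 := lexLt_evalT h h1 x (by omega)
  have e2 := lexLt_evalT h.symm h2 x (by omega)
  omega

/-- Quantifier-free formula expressing pointwise equality of two term lists. -/
def eqForm : List OTerm → List OTerm → FFormula
  | [], [] => .eq .zero .zero
  | a :: as, b :: bs => .and (.eq a b) (eqForm as bs)
  | _, _ => .lt .zero .zero

/-- Quantifier-free formula expressing lexicographic `<` of two term lists. -/
def ltForm : List OTerm → List OTerm → FFormula
  | a :: as, b :: bs => .or (.lt a b) (.and (.eq a b) (ltForm as bs))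
  | _, _ => .lt .zero .zero

lemma eqForm_qf (A B : List OTerm) : (eqForm A B).QuantifierFree := by
  induction A generalizing B with
  | nil => cases B <;> simp [eqForm, FFormula.QuantifierFree]
  | cons a as ih => cases B <;> simp [eqForm, FFormula.QuantifierFree, ih]

lemma ltForm_qf (A B : List OTerm) : (ltForm A B).QuantifierFree := by
  induction A generalizing B with
  | nil => cases B <;> simp [ltForm, FFormula.QuantifierFree]
  | cons a as ih => cases B <;> simp [ltForm, FFormula.QuantifierFree, ih]

lemma eqForm_sat {A B : List OTerm} (h : A.length = B.length) (v : ℕ → ℕ) :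
    (eqForm A B).Sat ℕ v ↔ A.map (OTerm.eval v) = B.map (OTerm.eval v) := by
  induction A generalizing B with
  | nil =>
    cases B with
    | nil => simp [eqForm, FFormula.Sat, OTerm.eval]
    | cons b bs => simp at h
  | cons a as ih =>
    cases B with
    | nil => simp at h
    | cons b bs =>
      have hlen : as.length = bs.length := by simpa using h
      simp [eqForm, FFormula.Sat, ih hlen]

lemma ltForm_sat {A B : List OTerm} (h : A.length = B.length) (v : ℕ → ℕ) :
    (ltForm A B).Sat ℕ v ↔ lexLt (A.map (OTerm.eval v)) (B.map (OTerm.eval v)) := by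
  induction A generalizing B with
  | nil =>
    cases B with
    | nil => simp [ltForm, FFormula.Sat, OTerm.eval, lexLt]
    | cons b bs => simp at h
  | cons a as ih =>
    cases B with
    | nil => simp at h
    | cons b bs =>
      have hlen : as.length = bs.length := by simpa using h
      simp [ltForm, FFormula.Sat, ih hlen, lexLt]

/-- A quantifier-free formula is eventually (as variable `i` grows) equivalent to
a quantifier-free formula not depending on `i`'s value. -/
lemma eventually_equiv (φ : FFormula) (hqf : φ.QuantifierFree) (i : ℕ) :
    ∃ ψ : FFormula, ψ.QuantifierFree ∧ ∀ v : ℕ → ℕ,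
      ∀ᶠ x in atTop, (φ.Sat ℕ (Function.update v i x) ↔ ψ.Sat ℕ v) := by
  induction φ with
  | eq t s =>
    set n := max (polyO i t).length (polyO i s).length with hn
    have hA : (rcoeff i n t).length = n := rcoeff_length (le_max_left _ _)
    have hB : (rcoeff i n s).length = n := rcoeff_length (le_max_right _ _)
    refine ⟨eqForm (rcoeff i n t) (rcoeff i n s), eqForm_qf _ _, fun v => ?_⟩
    set a := (rcoeff i n t).map (OTerm.eval v) with ha
    set b := (rcoeff i n s).map (OTerm.eval v) with hb
    have hlen : a.length = b.length := by simp [ha, hb, hA, hB]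
    have hevt : ∀ x, t.eval (Function.update v i x) = evalT a x :=
      fun x => eval_eq_evalT i n t (le_max_left _ _) v x
    have hevs : ∀ x, s.eval (Function.update v i x) = evalT b x :=
      fun x => eval_eq_evalT i n s (le_max_right _ _) v x
    have hsat : (eqForm (rcoeff i n t) (rcoeff i n s)).Sat ℕ v ↔ a = b :=
      eqForm_sat (by simp [hA, hB]) v
    rcases lexLt_trichotomy hlen with hlex | heq | hlex
    · have hev : ∀ᶠ x in atTop, evalT a x < evalT b x :=
        eventually_atTop.2 ⟨a.sum + 1, fun x hx => lexLt_evalT hlen hlex x (by omega)⟩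
      refine hev.mono fun x hx => ?_
      simp only [FFormula.Sat, hevt, hevs, hsat]
      constructor
      · intro he; omega
      · intro he; rw [he] at hlex; exact absurd hlex (lexLt_irrefl _)
    · refine Eventually.of_forall fun x => ?_
      simp only [FFormula.Sat, hevt, hevs, hsat, heq]
    · have hev : ∀ᶠ x in atTop, evalT b x < evalT a x :=
        eventually_atTop.2 ⟨b.sum + 1, fun x hx => lexLt_evalT hlen.symm hlex x (by omega)⟩
      refine hev.mono fun x hx => ?_
      simp only [FFormula.Sat, hevt, hevs, hsat]
      constructor
      · intro he; omega
      · intro he; rw [he] at hlex; exact absurd hlex (lexLt_irrefl _)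
  | lt t s =>
    set n := max (polyO i t).length (polyO i s).length with hn
    have hA : (rcoeff i n t).length = n := rcoeff_length (le_max_left _ _)
    have hB : (rcoeff i n s).length = n := rcoeff_length (le_max_right _ _)
    refine ⟨ltForm (rcoeff i n t) (rcoeff i n s), ltForm_qf _ _, fun v => ?_⟩
    set a := (rcoeff i n t).map (OTerm.eval v) with ha
    set b := (rcoeff i n s).map (OTerm.eval v) with hb
    have hlen : a.length = b.length := by simp [ha, hb, hA, hB]
    have hevt : ∀ x, t.eval (Function.update v i x) = evalT a x :=
      fun x => eval_eq_evalT i n t (le_max_left _ _) v x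
    have hevs : ∀ x, s.eval (Function.update v i x) = evalT b x :=
      fun x => eval_eq_evalT i n s (le_max_right _ _) v x
    have hsat : (ltForm (rcoeff i n t) (rcoeff i n s)).Sat ℕ v ↔ lexLt a b :=
      ltForm_sat (by simp [hA, hB]) v
    rcases lexLt_trichotomy hlen with hlex | heq | hlex
    · have hev : ∀ᶠ x in atTop, evalT a x < evalT b x :=
        eventually_atTop.2 ⟨a.sum + 1, fun x hx => lexLt_evalT hlen hlex x (by omega)⟩
      refine hev.mono fun x hx => ?_
      simp only [FFormula.Sat, hevt, hevs, hsat]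
      exact iff_of_true hx hlex
    · refine Eventually.of_forall fun x => ?_
      simp only [FFormula.Sat, hevt, hevs, hsat, heq]
      exact iff_of_false (lt_irrefl _) (lexLt_irrefl _)
    · have hev : ∀ᶠ x in atTop, evalT b x < evalT a x :=
        eventually_atTop.2 ⟨b.sum + 1, fun x hx => lexLt_evalT hlen.symm hlex x (by omega)⟩
      refine hev.mono fun x hx => ?_
      simp only [FFormula.Sat, hevt, hevs, hsat]
      exact iff_of_false (by omega) (fun h' => lexLt_asymm hlen h' hlex)
  | not φ ih =>
    obtain ⟨ψ, hψqf, hψ⟩ := ih hqf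
    exact ⟨.not ψ, hψqf, fun v => (hψ v).mono fun x hx => by
      simp only [FFormula.Sat]; exact not_congr hx⟩
  | and φ₁ φ₂ ih₁ ih₂ =>
    obtain ⟨ψ₁, h1qf, h1⟩ := ih₁ hqf.1
    obtain ⟨ψ₂, h2qf, h2⟩ := ih₂ hqf.2
    exact ⟨.and ψ₁ ψ₂, ⟨h1qf, h2qf⟩, fun v => ((h1 v).and (h2 v)).mono fun x hx => by
      simp only [FFormula.Sat]; exact and_congr hx.1 hx.2⟩
  | or φ₁ φ₂ ih₁ ih₂ =>
    obtain ⟨ψ₁, h1qf, h1⟩ := ih₁ hqf.1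
    obtain ⟨ψ₂, h2qf, h2⟩ := ih₂ hqf.2
    exact ⟨.or ψ₁ ψ₂, ⟨h1qf, h2qf⟩, fun v => ((h1 v).and (h2 v)).mono fun x hx => by
      simp only [FFormula.Sat]; exact or_congr hx.1 hx.2⟩
  | Q j φ ih => exact absurd hqf (by simp [FFormula.QuantifierFree])

lemma sat_Q_iff (i : ℕ) (φ : FFormula) (v : ℕ → ℕ) :
    (FFormula.Q i φ).Sat ℕ v ↔ ∀ᶠ x in atTop, φ.Sat ℕ (Function.update v i x) := by
  simp only [FFormula.Sat, eventually_atTop]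
  constructor
  · rintro ⟨z, h⟩; exact ⟨z + 1, fun x hx => h x (by omega)⟩
  · rintro ⟨z, h⟩; exact ⟨z, fun x hx => h x (le_of_lt hx)⟩

end FQE

/-- Every `F`-formula is equivalent in `ℕ` to a quantifier-free formula. -/
theorem F_formula_equiv_quantifier_free_in_nat (φ : FFormula) :
    ∃ ψ : FFormula, ψ.QuantifierFree ∧ ∀ v : ℕ → ℕ, φ.Sat ℕ v ↔ ψ.Sat ℕ v := by
  induction φ with
  | eq t s => exact ⟨.eq t s, trivial, fun v => Iff.rfl⟩
  | lt t s => exact ⟨.lt t s, trivial, fun v => Iff.rfl⟩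
  | not φ ih =>
    obtain ⟨ψ, hqf, h⟩ := ih
    exact ⟨.not ψ, hqf, fun v => by simp only [FFormula.Sat]; exact not_congr (h v)⟩
  | and φ₁ φ₂ ih₁ ih₂ =>
    obtain ⟨ψ₁, h1qf, h1⟩ := ih₁
    obtain ⟨ψ₂, h2qf, h2⟩ := ih₂
    exact ⟨.and ψ₁ ψ₂, ⟨h1qf, h2qf⟩, fun v => by
      simp only [FFormula.Sat]; exact and_congr (h1 v) (h2 v)⟩
  | or φ₁ φ₂ ih₁ ih₂ =>
    obtain ⟨ψ₁, h1qf, h1⟩ := ih₁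
    obtain ⟨ψ₂, h2qf, h2⟩ := ih₂
    exact ⟨.or ψ₁ ψ₂, ⟨h1qf, h2qf⟩, fun v => by
      simp only [FFormula.Sat]; exact or_congr (h1 v) (h2 v)⟩
  | Q i φ ih =>
    obtain ⟨ψ₀, h0qf, h0⟩ := ih
    obtain ⟨ψ, hqf, hψ⟩ := FQE.eventually_equiv ψ₀ h0qf i
    refine ⟨ψ, hqf, fun v => ?_⟩
    have hq : (FFormula.Q i φ).Sat ℕ v ↔ (FFormula.Q i ψ₀).Sat ℕ v := by
      simp only [FFormula.Sat]
      exact exists_congr fun z => forall_congr' fun x => imp_congr Iff.rfl (h0 _)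
    rw [hq, FQE.sat_Q_iff]
    constructor
    · intro h
      exact ((h.and (hψ v)).mono fun x hx => hx.2.mp hx.1).exists.elim fun _ hx => hx
    · intro h
      exact (hψ v).mono fun x hx => hx.mpr h
end

section
/- Let A be an ordered commutative ring and R a linearly ordered structure extending A in the language of ordered rings, such that A is unbounded in R (for every r ∈ R there is a ∈ A with a > r) and every F-definable subset of R satisfies the asymptotic dichotomy (for each such X there is r ∈ R with (r,∞) ⊆ X or (r,∞) ∩ X = ∅). Then A is an F-elementary substructure of R: for every F-formula φ and parameters ā from A, A ⊨ φ(ā) iff R ⊨ φ(ā). -/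
/-!
Induction on the formula. Atomic formulas transfer because `f` preserves terms and
reflects `=` and `<`. For `Q i φ`, the dichotomy says the set defined by `φ` in `R` either
contains or misses a final segment; since `A` is cofinal in `R`, which of the two happens is
detected by elements of `A`, where the induction hypothesis applies.
-/

theorem OTerm.eval_comp {α β : Type*} [Add α] [Mul α] [Zero α] [One α]
    [Add β] [Mul β] [Zero β] [One β] (f : α → β)
    (hadd : ∀ x y : α, f (x + y) = f x + f y) (hmul : ∀ x y : α, f (x * y) = f x * f y)
    (hzero : f 0 = 0) (hone : f 1 = 1) (v : ℕ → α) (t : OTerm) :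
    t.eval (f ∘ v) = f (t.eval v) := by
  induction t with
  | var i => rfl
  | zero => exact hzero.symm
  | one => exact hone.symm
  | add t s ht hs => simp only [OTerm.eval, ht, hs, hadd]
  | mul t s ht hs => simp only [OTerm.eval, ht, hmul, hs]

theorem exists_forall_gt_iff_of_cofinal {A R : Type*} [LinearOrder A] [LinearOrder R]
    {f : A → R} (hf : StrictMono f) (hcofinal : ∀ r : R, ∃ a : A, r < f a)
    {P : A → Prop} {S : R → Prop} (hPS : ∀ a, P a ↔ S (f a))
    (hS : ∃ r : R, (∀ x, r < x → S x) ∨ (∀ x, r < x → ¬ S x)) :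
    (∃ z : A, ∀ a, z < a → P a) ↔ ∃ r : R, ∀ x, r < x → S x := by
  constructor
  · rintro ⟨z, hz⟩
    obtain ⟨r, hr | hr⟩ := hS
    · exact ⟨r, hr⟩
    · obtain ⟨a, ha⟩ := hcofinal (max (f z) r)
      rw [max_lt_iff, hf.lt_iff_lt] at ha
      exact (hr (f a) ha.2 ((hPS a).1 (hz a ha.1))).elim
  · rintro ⟨r, hr⟩
    obtain ⟨z, hz⟩ := hcofinal r
    exact ⟨z, fun a ha => (hPS a).2 (hr (f a) (hz.trans (hf ha)))⟩

/-- If `A` is an ordered commutative ring embedded (as an ordered-ring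
substructure) in a linearly ordered structure `R` for the language of ordered
rings, `A` is unbounded in `R`, and every `F`-definable subset of `R` satisfies
the asymptotic dichotomy, then `A` is an `F`-elementary substructure of `R`. -/
theorem F_elementary_of_unbounded_asymptotic_dichotomy
    {A : Type*} [CommRing A] [LinearOrder A] [IsStrictOrderedRing A]
    {R : Type*} [Add R] [Mul R] [Zero R] [One R] [LinearOrder R]
    (f : A → R)
    (hinj : Function.Injective f)
    (hadd : ∀ x y : A, f (x + y) = f x + f y)
    (hmul : ∀ x y : A, f (x * y) = f x * f y)
    (hzero : f 0 = 0) (hone : f 1 = 1)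
    (hlt : ∀ x y : A, x < y ↔ f x < f y)
    (hunbounded : ∀ r : R, ∃ a : A, r < f a)
    (hdichotomy : ∀ (φ : FFormula) (v : ℕ → R) (i : ℕ), ∃ r : R,
      (∀ x : R, r < x → φ.Sat R (Function.update v i x)) ∨
      (∀ x : R, r < x → ¬ φ.Sat R (Function.update v i x)))
    (φ : FFormula) (v : ℕ → A) :
    φ.Sat A v ↔ φ.Sat R (fun i => f (v i)) := by
  have heval := OTerm.eval_comp f hadd hmul hzero hone
  have hf : StrictMono f := fun x y => (hlt x y).1
  change φ.Sat A v ↔ φ.Sat R (f ∘ v)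
  induction φ generalizing v with
  | eq t s => simp only [FFormula.Sat, heval, hinj.eq_iff]
  | lt t s => simp only [FFormula.Sat, heval, hf.lt_iff_lt]
  | not φ ih => exact not_congr (ih v)
  | and φ ψ ihφ ihψ => exact and_congr (ihφ v) (ihψ v)
  | or φ ψ ihφ ihψ => exact or_congr (ihφ v) (ihψ v)
  | Q i φ ih =>
    refine exists_forall_gt_iff_of_cofinal hf hunbounded (fun a => ?_) (hdichotomy φ _ i)
    rw [ih, Function.comp_update]
end

section
/- Let F be a real closed field and R a proper convex subring of F (so R ≠ F). If a ∈ R with a > 0 and 1/a > r for all r ∈ R, then R satisfies 'for all sufficiently large x, a·x < 1' (i.e., ∃z ∈ R ∀x ∈ R, x > z → a·x < 1), while F does not satisfy this sentence. Hence the quantifier Q is not preserved from a convex subring to the field when the subring is bounded. -/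
/-- A linearly ordered field is real closed if every nonnegative element has a
square root and every odd degree polynomial has a root. -/
def IsRealClosedOld (F : Type*) [Field F] [LinearOrder F] [IsStrictOrderedRing F] : Prop :=
  (∀ x : F, 0 ≤ x → ∃ y : F, y ^ 2 = x) ∧
    (∀ p : Polynomial F, Odd p.natDegree → ∃ x : F, p.eval x = 0)

section

variable {F : Type*} [Semifield F] [LinearOrder F] [IsStrictOrderedRing F] {a : F}

theorem mul_lt_one_iff_lt_inv (ha : 0 < a) {x : F} : a * x < 1 ↔ x < a⁻¹ :=
  (lt_iff_lt_of_le_iff_le (inv_le_iff_one_le_mul₀' ha)).symm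

theorem not_exists_forall_gt_mul_lt_one (ha : 0 < a) :
    ¬ ∃ z : F, ∀ x : F, z < x → a * x < 1 := by
  rintro ⟨z, hz⟩
  have hzx : z < max z a⁻¹ + 1 := (le_max_left z a⁻¹).trans_lt (lt_add_one _)
  have hinvx : a⁻¹ < max z a⁻¹ + 1 := (le_max_right z a⁻¹).trans_lt (lt_add_one _)
  exact hinvx.not_gt ((mul_lt_one_iff_lt_inv ha).mp (hz _ hzx))

end

theorem Q_not_preserved_convex_subring_general {F : Type*} [Field F] [LinearOrder F] [IsStrictOrderedRing F]
    (R : Subring F)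
    (a : F) (hapos : 0 < a) (hbig : ∀ r ∈ R, r < a⁻¹) :
    (∃ z ∈ R, ∀ x ∈ R, z < x → a * x < 1) ∧
      ¬ (∃ z : F, ∀ x : F, z < x → a * x < 1) :=
  ⟨⟨0, R.zero_mem, fun x hx _ => (mul_lt_one_iff_lt_inv hapos).mpr (hbig x hx)⟩,
    not_exists_forall_gt_mul_lt_one hapos⟩

theorem Q_not_preserved_convex_subring {F : Type*} [Field F] [LinearOrder F] [IsStrictOrderedRing F]
    (hF : IsRealClosedOld F) (R : Subring F)
    (hconv : ∀ x ∈ R, ∀ y ∈ R, ∀ z : F, x ≤ z → z ≤ y → z ∈ R)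
    (hproper : (R : Set F) ≠ Set.univ)
    (a : F) (ha : a ∈ R) (hapos : 0 < a) (hbig : ∀ r ∈ R, r < a⁻¹) :
    (∃ z ∈ R, ∀ x ∈ R, z < x → a * x < 1) ∧
      ¬ (∃ z : F, ∀ x : F, z < x → a * x < 1) :=
  Q_not_preserved_convex_subring_general R a hapos hbig
end

section
/- If a predicate φ on ℕ holds for all n greater than some z ∈ ℕ, and the corresponding predicate on ℝ agrees with φ at every natural number argument, and the real solution set {x ∈ ℝ : Φ(x)} is a finite union of points and intervals, then {x ∈ ℝ : Φ(x)} contains a ray (r, ∞). Conversely, if {x ∈ ℝ : Φ(x)} contains a ray (r, ∞), then φ(n) holds for all naturals n > r. (Preservation of the Q-quantifier between ℕ and ℝ at the inductive step.) -/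
theorem Q_transfer_inductive_step (φ : ℕ → Prop) (Φ : ℝ → Prop)
    (hagree : ∀ n : ℕ, Φ (n : ℝ) ↔ φ n)
    (hdef : IsFinUnionOfPointsAndIntervals {x : ℝ | Φ x}) :
    ((∃ z : ℕ, ∀ n > z, φ n) → ∃ r : ℝ, ∀ x : ℝ, r < x → Φ x) ∧
      (∀ r : ℝ, (∀ x : ℝ, r < x → Φ x) → ∀ n : ℕ, r < (n : ℝ) → φ n) := by
  constructor
  · rintro ⟨z, hz⟩
    obtain ⟨n, f, hf, hX⟩ := hdef
    have hmem : ∀ k : ℕ, ((k + z + 1 : ℕ) : ℝ) ∈ ⋃ i, f i := by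
      intro k
      rw [← hX]
      exact (hagree _).mpr (hz _ (by omega))
    choose g hg using fun k => Set.mem_iUnion.mp (hmem k)
    obtain ⟨i, hi0⟩ := Finite.exists_infinite_fiber g
    have hi : (g ⁻¹' {i}).Infinite := Set.infinite_coe_iff.mp hi0
    obtain ⟨k₀, hk₀⟩ := hi.nonempty
    have hk₀' : g k₀ = i := hk₀
    have hord : (f i).OrdConnected := by
      rcases hf i with ⟨a, ha⟩ | h
      · exfalso
        obtain ⟨k₁, hk₁, hne⟩ := hi.nontrivial.exists_ne k₀
        have hk₁' : g k₁ = i := hk₁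
        have h0 : ((k₀ + z + 1 : ℕ) : ℝ) = a := by
          have := hg k₀; rw [hk₀', ha] at this; exact this
        have h1 : ((k₁ + z + 1 : ℕ) : ℝ) = a := by
          have := hg k₁; rw [hk₁', ha] at this; exact this
        have : ((k₀ : ℝ)) = (k₁ : ℝ) := by push_cast at h0 h1; linarith
        exact hne (Nat.cast_injective (by exact_mod_cast this.symm))
      · exact h
    refine ⟨((k₀ + z + 1 : ℕ) : ℝ), fun x hx => ?_⟩
    obtain ⟨k, hk, hkgt⟩ := hi.exists_gt ⌈x⌉₊
    have hk' : g k = i := hk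
    have hxle : x ≤ ((k + z + 1 : ℕ) : ℝ) := by
      have := Nat.le_ceil x
      have h2 : ((⌈x⌉₊ : ℝ)) ≤ ((k + z + 1 : ℕ) : ℝ) := by
        exact_mod_cast Nat.le_of_lt (by omega)
      linarith
    have hxmem : x ∈ f i := by
      have m0 := hg k₀; rw [hk₀'] at m0
      have m1 := hg k; rw [hk'] at m1
      exact hord.out m0 m1 ⟨le_of_lt hx, hxle⟩
    have : x ∈ {x : ℝ | Φ x} := by rw [hX]; exact Set.mem_iUnion.mpr ⟨i, hxmem⟩
    exact this
  · intro r h n hn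
    exact (hagree n).mp (h n hn)
end
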